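/- Let X = (X_1, X_2, ...) be a conditionally identically distributed (c.i.d.) sequence on a measurable space, i.e., E(I_B(X_k) | σ(X_1,...,X_n)) = E(I_B(X_{n+1}) | σ(X_1,...,X_n)) a.s. for all measurable B and all k > n ≥ 0. Then for every measurable set B and all k > n, E(μ_k(B) | G_n) = (1/k)[Σ_{i=1}^{min(n,k)} I_B(X_i) + (k - n)^+ · a_n(B)] a.s., where μ_k = (1/k)Σ_{i=1}^k δ_{X_i} is the empirical measure, G_n = σ(X_1,...,X_n), and a_n(B) = P(X_{n+1} ∈ B | G_n). In particular, if μ_n(B) → μ(B) a.s. for a bounded random variable μ(B), then E(μ(B) | G_n) = a_n(B) a.s. -/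

import Mathlib

open MeasureTheory Filter Set

/-!
By linearity, `E(μ_k(B) | G_n)` splits into the `n` observed indicators, which are
`G_n`-measurable, and the `k - n` future ones, each of which has conditional expectation
`a_n(B)` by the c.i.d. property. As `k → ∞` this expression tends to `a_n(B)`, and since
`|μ_k(B)| ≤ 1`, conditional dominated convergence identifies `E(μ(B) | G_n)` with `a_n(B)`.
-/

/-- The σ-field generated by the first `n` coordinates. -/
noncomputable def cylG (S : Type*) [MeasurableSpace S] (n : ℕ) : MeasurableSpace (ℕ → S) :=
  MeasurableSpace.comap (fun ω (i : Fin n) => ω i) inferInstance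

/-- Empirical frequency of `B` among the first `n` observations. -/
noncomputable def empMeas {S : Type*} (n : ℕ) (B : Set S) (ω : ℕ → S) : ℝ :=
  (n : ℝ)⁻¹ * ∑ i ∈ Finset.range n, B.indicator (fun _ => (1 : ℝ)) (ω i)

/-- The predictive probability `a_n(B) = P(X_{n+1} ∈ B ∣ G_n)` (0-indexed: the next
observation after the first `n` is coordinate `n`). -/
noncomputable def predProb {S : Type*} [MeasurableSpace S] (P : Measure (ℕ → S))
    (n : ℕ) (B : Set S) : (ℕ → S) → ℝ :=
  P[fun ω => B.indicator (fun _ => (1 : ℝ)) (ω n) | cylG S n]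

/-- The sequence of coordinates is conditionally identically distributed under `P`. -/
def CID {S : Type*} [MeasurableSpace S] (P : Measure (ℕ → S)) : Prop :=
  ∀ B : Set S, MeasurableSet B → ∀ n k : ℕ, n < k →
    (P[fun ω => B.indicator (fun _ => (1 : ℝ)) (ω k) | cylG S n])
      =ᵐ[P] P[fun ω => B.indicator (fun _ => (1 : ℝ)) (ω n) | cylG S n]

section CondExpLimit

variable {α : Type*} {m m₀ : MeasurableSpace α} {μ : Measure α} [IsFiniteMeasure μ]

/-- Conditional dominated convergence, applied both to `fs k` and to `μ[fs k | m]`, which have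
the same conditional expectation. -/
theorem condExp_ae_eq_condExp_of_tendsto (hm : m ≤ m₀) {fs : ℕ → α → ℝ} {f g : α → ℝ}
    (hfs : ∀ k, AEStronglyMeasurable (fs k) μ) {C : ℝ} (hC : ∀ k, ∀ᵐ x ∂μ, |fs k x| ≤ C)
    (hf : ∀ᵐ x ∂μ, Tendsto (fun k => fs k x) atTop (nhds (f x)))
    (hg : ∀ᵐ x ∂μ, Tendsto (fun k => μ[fs k | m] x) atTop (nhds (g x))) :
    μ[f | m] =ᵐ[μ] μ[g | m] :=
  tendsto_condExp_unique fs (fun k => μ[fs k | m]) f g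
    (fun k => .of_bound (hfs k) C (hC k)) (fun _ => integrable_condExp) hf hg
    (fun _ => C) (integrable_const _) (fun _ => C) (integrable_const _) hC
    (fun k => ae_bdd_abs_condExp_of_ae_bdd_abs (hC k))
    (fun _ => (condExp_condExp_of_le le_rfl hm).symm)

end CondExpLimit

theorem tendsto_inv_mul_add_sub_mul (s a : ℝ) (n : ℕ) :
    Tendsto (fun k : ℕ => (k : ℝ)⁻¹ * (s + ((k : ℝ) - n) * a)) atTop (nhds a) := by
  have hinv : Tendsto (fun k : ℕ => (k : ℝ)⁻¹) atTop (nhds 0) :=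
    tendsto_inv_atTop_zero.comp tendsto_natCast_atTop_atTop
  have hlim : Tendsto (fun k : ℕ => (k : ℝ)⁻¹ * s + (1 - n * (k : ℝ)⁻¹) * a) atTop
      (nhds (0 * s + (1 - n * 0) * a)) :=
    (hinv.mul_const s).add (((hinv.const_mul (n : ℝ)).const_sub 1).mul_const a)
  refine (hlim.congr' ?_).trans (by simp)
  filter_upwards [eventually_ne_atTop 0] with k hk
  field_simp

section Frequencies

variable {S : Type*} {B : Set S}

theorem abs_indicator_coord_le_one (ω : ℕ → S) (i : ℕ) :
    |B.indicator (fun _ => (1 : ℝ)) (ω i)| ≤ 1 := by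
  by_cases h : ω i ∈ B <;> simp [h]

theorem abs_empMeas_le_one (k : ℕ) (ω : ℕ → S) : |empMeas k B ω| ≤ 1 := by
  have hsum : |∑ i ∈ Finset.range k, B.indicator (fun _ => (1 : ℝ)) (ω i)| ≤ k :=
    (Finset.abs_sum_le_sum_abs _ _).trans <| by
      simpa using Finset.sum_le_sum fun i (_ : i ∈ Finset.range k) => abs_indicator_coord_le_one ω i
  rcases Nat.eq_zero_or_pos k with rfl | hk
  · simp [empMeas]
  · rw [empMeas, abs_mul, abs_inv, Nat.abs_cast, inv_mul_le_iff₀ (by positivity), mul_one]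
    exact hsum

end Frequencies

section Cylinder

variable {S : Type*} [MeasurableSpace S]

theorem cylG_le (n : ℕ) : cylG S n ≤ (inferInstance : MeasurableSpace (ℕ → S)) :=
  measurable_iff_comap_le.mp (measurable_pi_lambda _ fun j => measurable_pi_apply (j : ℕ))

theorem measurable_coord_cylG {i n : ℕ} (hi : i < n) :
    Measurable[cylG S n] fun ω : ℕ → S => ω i :=
  (measurable_pi_apply (⟨i, hi⟩ : Fin n)).comp (measurable_iff_comap_le.mpr le_rfl :
    Measurable[cylG S n] fun ω : ℕ → S => fun j : Fin n => ω j)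

variable {B : Set S}

theorem measurable_indicator_coord (hB : MeasurableSet B) (i : ℕ) :
    Measurable fun ω : ℕ → S => B.indicator (fun _ => (1 : ℝ)) (ω i) :=
  (measurable_const.indicator hB).comp (measurable_pi_apply i)

theorem stronglyMeasurable_cylG_indicator_coord (hB : MeasurableSet B) {i n : ℕ} (hi : i < n) :
    StronglyMeasurable[cylG S n] fun ω : ℕ → S => B.indicator (fun _ => (1 : ℝ)) (ω i) :=
  ((measurable_const.indicator hB).comp (measurable_coord_cylG hi)).stronglyMeasurable

theorem integrable_indicator_coord (P : Measure (ℕ → S)) [IsFiniteMeasure P]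
    (hB : MeasurableSet B) (i : ℕ) :
    Integrable (fun ω : ℕ → S => B.indicator (fun _ => (1 : ℝ)) (ω i)) P :=
  .of_bound (measurable_indicator_coord hB i).aestronglyMeasurable 1
    (.of_forall fun ω => abs_indicator_coord_le_one ω i)

theorem measurable_empMeas (hB : MeasurableSet B) (k : ℕ) :
    Measurable fun ω : ℕ → S => empMeas k B ω :=
  (Finset.measurable_fun_sum _ fun i _ => measurable_indicator_coord hB i).const_mul _

end Cylinder

section CID

variable {S : Type*} [MeasurableSpace S] {P : Measure (ℕ → S)} {B : Set S}

theorem CID.condExp_indicator_coord (hcid : CID P) (hB : MeasurableSet B) {n i : ℕ}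
    (hni : n ≤ i) :
    P[fun ω => B.indicator (fun _ => (1 : ℝ)) (ω i) | cylG S n] =ᵐ[P] predProb P n B := by
  rcases hni.eq_or_lt with rfl | hlt
  · rfl
  · exact hcid B hB n i hlt

variable [IsFiniteMeasure P]

theorem condExp_indicator_coord_of_lt (hB : MeasurableSet B) {i n : ℕ} (hi : i < n) :
    P[fun ω => B.indicator (fun _ => (1 : ℝ)) (ω i) | cylG S n]
      = fun ω => B.indicator (fun _ => (1 : ℝ)) (ω i) :=
  condExp_of_stronglyMeasurable (cylG_le n) (stronglyMeasurable_cylG_indicator_coord hB hi)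
    (integrable_indicator_coord P hB i)

theorem CID.condExp_sum_indicator_coord (hcid : CID P) (hB : MeasurableSet B) {n k : ℕ}
    (hnk : n ≤ k) :
    P[fun ω => ∑ i ∈ Finset.range k, B.indicator (fun _ => (1 : ℝ)) (ω i) | cylG S n] =ᵐ[P]
      fun ω => ∑ i ∈ Finset.range n, B.indicator (fun _ => (1 : ℝ)) (ω i)
        + ((k : ℝ) - n) * predProb P n B ω := by
  set X : ℕ → (ℕ → S) → ℝ := fun i ω => B.indicator (fun _ => (1 : ℝ)) (ω i)
  have hsum : (fun ω => ∑ i ∈ Finset.range k, X i ω) = ∑ i ∈ Finset.range k, X i := by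
    ext ω; simp only [Finset.sum_apply]
  have hpast : ∑ i ∈ Finset.range n, P[X i | cylG S n] = ∑ i ∈ Finset.range n, X i :=
    Finset.sum_congr rfl fun i hi =>
      condExp_indicator_coord_of_lt hB (Finset.mem_range.mp hi)
  have hfuture : ∑ i ∈ Finset.Ico n k, P[X i | cylG S n]
      =ᵐ[P] ∑ _i ∈ Finset.Ico n k, predProb P n B :=
    eventuallyEq_sum fun i hi => hcid.condExp_indicator_coord hB (Finset.mem_Ico.mp hi).1
  rw [hsum]
  refine (condExp_finsetSum (fun i _ => integrable_indicator_coord P hB i) _).trans ?_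
  rw [← Finset.sum_range_add_sum_Ico _ hnk, hpast]
  filter_upwards [hfuture] with ω hω
  simp only [Pi.add_apply, Finset.sum_apply] at hω ⊢
  rw [hω, Finset.sum_const, Nat.card_Ico, nsmul_eq_mul, Nat.cast_sub hnk]

theorem CID.condExp_empMeas (hcid : CID P) (hB : MeasurableSet B) {n k : ℕ} (hnk : n ≤ k) :
    P[fun ω => empMeas k B ω | cylG S n] =ᵐ[P]
      fun ω => (k : ℝ)⁻¹ * (∑ i ∈ Finset.range n, B.indicator (fun _ => (1 : ℝ)) (ω i)
        + ((k : ℝ) - n) * predProb P n B ω) := by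
  have hemp : (fun ω => empMeas k B ω) = (k : ℝ)⁻¹ •
      fun ω => ∑ i ∈ Finset.range k, B.indicator (fun _ => (1 : ℝ)) (ω i) := rfl
  rw [hemp]
  filter_upwards [condExp_smul (μ := P) (k : ℝ)⁻¹
    (fun ω => ∑ i ∈ Finset.range k, B.indicator (fun _ => (1 : ℝ)) (ω i)) (cylG S n),
    hcid.condExp_sum_indicator_coord hB hnk] with ω hsmul hsum
  rw [hsmul, Pi.smul_apply, hsum, smul_eq_mul]

theorem CID.condExp_eq_predProb_of_tendsto (hcid : CID P) (hB : MeasurableSet B)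
    {μB : (ℕ → S) → ℝ} (hconv : ∀ᵐ ω ∂P, Tendsto (fun k => empMeas k B ω) atTop (nhds (μB ω)))
    (n : ℕ) : P[μB | cylG S n] =ᵐ[P] predProb P n B := by
  have hlim : ∀ᵐ ω ∂P, Tendsto (fun k => P[fun ω => empMeas k B ω | cylG S n] ω) atTop
      (nhds (predProb P n B ω)) := by
    filter_upwards [ae_all_iff.2 fun j => hcid.condExp_empMeas hB (Nat.le_add_left n j)]
      with ω hω
    refine (tendsto_add_atTop_iff_nat n).1 ?_
    simp_rw [hω]
    exact (tendsto_inv_mul_add_sub_mul _ _ n).comp (tendsto_add_atTop_nat n)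
  refine (condExp_ae_eq_condExp_of_tendsto (cylG_le n)
    (fun k => (measurable_empMeas hB k).aestronglyMeasurable)
    (fun k => .of_forall (abs_empMeas_le_one k)) hconv hlim).trans ?_
  exact condExp_condExp_of_le le_rfl (cylG_le n)

end CID

theorem stmt0 {S : Type*} [MeasurableSpace S] (P : Measure (ℕ → S))
    [IsProbabilityMeasure P] (hcid : CID P) (B : Set S) (hB : MeasurableSet B) :
    (∀ n k : ℕ, n < k →
      (P[fun ω => empMeas k B ω | cylG S n]) =ᵐ[P]
        fun ω => (k : ℝ)⁻¹ *
          ((∑ i ∈ Finset.range (min n k), B.indicator (fun _ => (1 : ℝ)) (ω i))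
            + max ((k : ℝ) - (n : ℝ)) 0 * predProb P n B ω)) ∧
    (∀ μB : (ℕ → S) → ℝ, Measurable μB → (∃ C : ℝ, ∀ ω, |μB ω| ≤ C) →
      (∀ᵐ ω ∂P, Tendsto (fun n => empMeas n B ω) atTop (nhds (μB ω))) →
      ∀ n : ℕ, (P[μB | cylG S n]) =ᵐ[P] predProb P n B) := by
  refine ⟨fun n k hnk => ?_, fun μB _ _ hconv n => hcid.condExp_eq_predProb_of_tendsto hB hconv n⟩
  have hkn : (0 : ℝ) ≤ (k : ℝ) - n := sub_nonneg.mpr (Nat.cast_le.mpr hnk.le)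
  rw [min_eq_left hnk.le, max_eq_left hkn]
  exact hcid.condExp_empMeas hB hnk.le
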